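/- Let k ≥ 2 and σ ≥ 2, let S be a k-noncrossing, σ-canonical structure over [n], and let m̄(S) be the set of S-arcs lying in a stack of S that contains a ≺-maximal arc of S. Then every S-arc not contained in m̄(S) lies in a stack of S of length ≥ σ containing no arc of m̄(S); consequently the diagram S ∖ m̄(S) obtained by removing the arcs of m̄(S) is again k-noncrossing and σ-canonical. -/
import Mathlib


open Classical

/-- `ArcNested a b` means arc `a` is nested in arc `b`, i.e. `a ≺ b`. -/
def ArcNested (a b : ℕ × ℕ) : Prop := b.1 < a.1 ∧ a.2 < b.2

/-- Two arcs cross. -/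
def ArcCross (a b : ℕ × ℕ) : Prop :=
  (a.1 < b.1 ∧ b.1 < a.2 ∧ a.2 < b.2) ∨ (b.1 < a.1 ∧ a.1 < b.2 ∧ b.2 < a.2)

/-- A diagram over `[n] = {1,…,n}`: a partial matching given by its set of arcs `(i,j)`, `i<j`. -/
def IsDiagram (n : ℕ) (D : Finset (ℕ × ℕ)) : Prop :=
  (∀ a ∈ D, 1 ≤ a.1 ∧ a.1 < a.2 ∧ a.2 ≤ n) ∧
  (∀ a ∈ D, ∀ b ∈ D, a ≠ b → a.1 ≠ b.1 ∧ a.1 ≠ b.2 ∧ a.2 ≠ b.1 ∧ a.2 ≠ b.2)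

/-- `D` contains `k` mutually crossing arcs `(i₁,j₁),…,(i_k,j_k)`
with `i₁<⋯<i_k<j₁<⋯<j_k`. -/
def HasKCrossing (k : ℕ) (D : Finset (ℕ × ℕ)) : Prop :=
  ∃ f : Fin k → ℕ × ℕ, (∀ t, f t ∈ D) ∧
    (∀ t u : Fin k, t < u → (f t).1 < (f u).1) ∧
    (∀ t u : Fin k, t < u → (f t).2 < (f u).2) ∧
    (∀ t u : Fin k, (f t).1 < (f u).2)

/-- `D` is `k`-noncrossing: no `k` mutually crossing arcs. -/
def Noncrossing (k : ℕ) (D : Finset (ℕ × ℕ)) : Prop := ¬ HasKCrossing k D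

/-- Vertex `r` is unpaired in `D`. -/
def Unpaired (D : Finset (ℕ × ℕ)) (r : ℕ) : Prop := ∀ a ∈ D, a.1 ≠ r ∧ a.2 ≠ r

/-- Vertex `r` is paired in `D`. -/
def Paired (D : Finset (ℕ × ℕ)) (r : ℕ) : Prop := ∃ a ∈ D, a.1 = r ∨ a.2 = r

/-- `IsStack D i j l`: the parallel arcs `(i,j),(i+1,j-1),…,(i+l-1,j-l+1)` all belong to `D`
and this run is maximal (a stack of `D` of length `l`). -/
def IsStack (D : Finset (ℕ × ℕ)) (i j l : ℕ) : Prop :=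
  0 < l ∧ (∀ t < l, (i + t, j - t) ∈ D) ∧ (i - 1, j + 1) ∉ D ∧ (i + l, j - l) ∉ D

/-- `D` is `σ`-canonical: every stack has length at least `σ`. -/
def Canonical (σ : ℕ) (D : Finset (ℕ × ℕ)) : Prop := ∀ i j l, IsStack D i j l → σ ≤ l

/-- All arcs of `D` have length (`j - i`) at least `4`. -/
def MinArc4 (D : Finset (ℕ × ℕ)) : Prop := ∀ a ∈ D, a.1 + 4 ≤ a.2

/-- A `⟨k,σ⟩`-structure over `[n]`: a `k`-noncrossing, `σ`-canonical diagram over `[n]`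
all of whose arcs have length at least `4`. -/
def IsRNAStructure (n k σ : ℕ) (D : Finset (ℕ × ℕ)) : Prop :=
  IsDiagram n D ∧ Noncrossing k D ∧ Canonical σ D ∧ MinArc4 D

/-- Arc `a` is `≺`-maximal in `D`: it is nested in no other `D`-arc. -/
def PrecMaximal (D : Finset (ℕ × ℕ)) (a : ℕ × ℕ) : Prop :=
  a ∈ D ∧ ∀ b ∈ D, ¬ ArcNested a b

/-- Arcs `a` and `b` lie in a common stack of `D`. -/
def InCommonStack (D : Finset (ℕ × ℕ)) (a b : ℕ × ℕ) : Prop :=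
  ∃ i j l, IsStack D i j l ∧ (∃ t < l, a = (i + t, j - t)) ∧ (∃ t < l, b = (i + t, j - t))

/-- `m̄(D)`: the set of `D`-arcs lying in a stack of `D` containing a `≺`-maximal arc of `D`
(the shadow of the motif induced by the `≺`-maximal arcs). -/
noncomputable def shadowArcs (D : Finset (ℕ × ℕ)) : Finset (ℕ × ℕ) :=
  D.filter fun a => ∃ b, PrecMaximal D b ∧ InCommonStack D a b

/-- The residualDiagram diagrams: `residualDiagram D 0 = D` and
`residualDiagram D (s+1) = residualDiagram D s ∖ m̄(residualDiagram D s)`. -/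
noncomputable def residualDiagram (D : Finset (ℕ × ℕ)) : ℕ → Finset (ℕ × ℕ)
  | 0 => D
  | s + 1 => residualDiagram D s \ shadowArcs (residualDiagram D s)

/-- Sanity of arcs: first coordinate positive and less than second. -/
def ArcSane (E : Finset (ℕ × ℕ)) : Prop := ∀ a ∈ E, 1 ≤ a.1 ∧ a.1 < a.2

lemma stack_unique (E : Finset (ℕ × ℕ)) (hE : ArcSane E)
    {i j l i' j' l' : ℕ} (h : IsStack E i j l) (h' : IsStack E i' j' l')
    {t t' : ℕ} (ht : t < l) (ht' : t' < l')
    (heq : (i + t, j - t) = (i' + t', j' - t')) :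
    i = i' ∧ j = j' ∧ l = l' := by
  obtain ⟨hl, hmem, hlow, hhigh⟩ := h
  obtain ⟨hl', hmem', hlow', hhigh'⟩ := h'
  have key : ∀ s < l, s < j ∧ 1 ≤ i + s ∧ i + s < j - s := by
    intro s hs
    have := hE _ (hmem s hs)
    simp only at this
    omega
  have key' : ∀ s < l', s < j' ∧ 1 ≤ i' + s ∧ i' + s < j' - s := by
    intro s hs
    have := hE _ (hmem' s hs)
    simp only at this
    omega
  have e1 : i + t = i' + t' := congrArg Prod.fst heq
  have e2 : j - t = j' - t' := congrArg Prod.snd heq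
  have kt := key t ht
  have kt' := key' t' ht'
  have hsum : i + j = i' + j' := by omega
  have hii : i = i' := by
    by_contra hne
    rcases Nat.lt_or_ge i i' with hlt | hge
    · -- then (i'-1, j'+1) ∈ E, contradicting maximality of stack'
      have hs : i' - 1 - i < l := by omega
      have := hmem _ hs
      have : (i + (i' - 1 - i), j - (i' - 1 - i)) = (i' - 1, j' + 1) := by
        have := key _ hs
        exact Prod.ext (by omega) (by omega)
      exact hlow' (by rw [← this]; exact hmem _ hs)
    · have hlt : i' < i := by omega
      have hs : i - 1 - i' < l' := by omega
      have : (i' + (i - 1 - i'), j' - (i - 1 - i')) = (i - 1, j + 1) := by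
        have := key' _ hs
        exact Prod.ext (by omega) (by omega)
      exact hlow (by rw [← this]; exact hmem' _ hs)
  have htt : t = t' := by omega
  have hjj : j = j' := by omega
  refine ⟨hii, hjj, ?_⟩
  subst hii hjj
  by_contra hne
  rcases Nat.lt_or_ge l l' with hlt | hge
  · exact hhigh (hmem' l hlt)
  · exact hhigh' (hmem l' (by omega))

lemma stack_exists (E : Finset (ℕ × ℕ)) (hE : ArcSane E) {a : ℕ × ℕ} (ha : a ∈ E) :
    ∃ i j l, IsStack E i j l ∧ ∃ t < l, a = (i + t, j - t) := by
  classical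
  set P : ℕ → Prop := fun s => ∀ v ≤ s, (a.1 - v, a.2 + v) ∈ E with hPdef
  set Q : ℕ → Prop := fun s => ∀ v ≤ s, (a.1 + v, a.2 - v) ∈ E with hQdef
  have hP0 : P 0 := by
    intro v hv
    interval_cases v
    simpa using ha
  have hQ0 : Q 0 := by
    intro v hv
    interval_cases v
    simpa using ha
  have ha1 : 1 ≤ a.1 ∧ a.1 < a.2 := hE a ha
  set d := Nat.findGreatest P a.1 with hd
  set u := Nat.findGreatest Q a.2 with hu
  have hPd : P d := Nat.findGreatest_spec (m := 0) (Nat.zero_le _) hP0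
  have hQu : Q u := Nat.findGreatest_spec (m := 0) (Nat.zero_le _) hQ0
  have hda : d < a.1 := by
    have h1 := hE _ (hPd d le_rfl)
    simp only at h1
    omega
  have hua : a.1 + u < a.2 - u := by
    have h1 := hE _ (hQu u le_rfl)
    simp only at h1
    exact h1.2
  have hPnot : ¬ P (d + 1) :=
    Nat.findGreatest_is_greatest (n := a.1) (by omega) (by omega)
  have hQnot : ¬ Q (u + 1) :=
    Nat.findGreatest_is_greatest (n := a.2) (by omega) (by omega)
  refine ⟨a.1 - d, a.2 + d, d + u + 1, ⟨by omega, ?_, ?_, ?_⟩, d, by omega, ?_⟩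
  · intro s hs
    rcases le_or_gt s d with hsd | hsd
    · have : (a.1 - d + s, a.2 + d - s) = (a.1 - (d - s), a.2 + (d - s)) :=
        Prod.ext (by omega) (by omega)
      rw [this]
      exact hPd _ (by omega)
    · have : (a.1 - d + s, a.2 + d - s) = (a.1 + (s - d), a.2 - (s - d)) :=
        Prod.ext (by omega) (by omega)
      rw [this]
      exact hQu _ (by omega)
  · intro hmem
    apply hPnot
    intro v hv
    rcases le_or_gt v d with hvd | hvd
    · exact hPd v hvd
    · have hv1 : v = d + 1 := by omega
      subst hv1
      have : (a.1 - d - 1, a.2 + d + 1) = (a.1 - (d + 1), a.2 + (d + 1)) :=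
        Prod.ext (by omega) (by omega)
      rw [← this]
      exact hmem
  · intro hmem
    apply hQnot
    intro v hv
    rcases le_or_gt v u with hvu | hvu
    · exact hQu v hvu
    · have hv1 : v = u + 1 := by omega
      subst hv1
      have : (a.1 - d + (d + u + 1), a.2 + d - (d + u + 1)) = (a.1 + (u + 1), a.2 - (u + 1)) :=
        Prod.ext (by omega) (by omega)
      rw [← this]
      exact hmem
  · have : (a.1 - d + d, a.2 + d - d) = (a.1, a.2) := Prod.ext (by omega) (by omega)
    rw [this]

lemma shadow_closed (D : Finset (ℕ × ℕ)) (hE : ArcSane D)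
    {i j l : ℕ} (h : IsStack D i j l) {t t' : ℕ} (ht : t < l) (ht' : t' < l)
    (hm : (i + t, j - t) ∈ shadowArcs D) : (i + t', j - t') ∈ shadowArcs D := by
  rw [shadowArcs, Finset.mem_filter] at hm ⊢
  obtain ⟨_, b, hb, i₀, j₀, l₀, hst, ⟨s, hs, heq⟩, hbst⟩ := hm
  obtain ⟨rfl, rfl, rfl⟩ := stack_unique D hE h hst ht hs heq
  exact ⟨h.2.1 t' ht', b, hb, i, j, l, h, ⟨t', ht', rfl⟩, hbst⟩

/-- Let `k,σ ≥ 2`, let `S` be a `k`-noncrossing, `σ`-canonical structure over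
`[n]`, and let `m̄(S)` be the set of `S`-arcs lying in a stack of `S` containing a `≺`-maximal
arc.  Every `S`-arc not contained in `m̄(S)` lies in a stack of `S` of length `≥ σ` containing
no arc of `m̄(S)`; consequently `S ∖ m̄(S)` is again `k`-noncrossing and `σ`-canonical. -/
theorem statement4 (n k σ : ℕ) (hk : 2 ≤ k) (hσ : 2 ≤ σ) (D : Finset (ℕ × ℕ))
    (hD : IsRNAStructure n k σ D) :
    (∀ a ∈ D, a ∉ shadowArcs D →
      ∃ i j l, IsStack D i j l ∧ σ ≤ l ∧ (∃ t < l, a = (i + t, j - t)) ∧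
        ∀ t < l, (i + t, j - t) ∉ shadowArcs D) ∧
    IsDiagram n (D \ shadowArcs D) ∧
    Noncrossing k (D \ shadowArcs D) ∧
    Canonical σ (D \ shadowArcs D) := by
  obtain ⟨⟨hD1, hD2⟩, hNC, hCan, _⟩ := hD
  have hsane : ArcSane D := fun a ha => ⟨(hD1 a ha).1, (hD1 a ha).2.1⟩
  have hsub : D \ shadowArcs D ⊆ D := Finset.sdiff_subset
  have hsane' : ArcSane (D \ shadowArcs D) := fun a ha => hsane a (hsub ha)
  -- Part 1
  have part1 : ∀ a ∈ D, a ∉ shadowArcs D →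
      ∃ i j l, IsStack D i j l ∧ σ ≤ l ∧ (∃ t < l, a = (i + t, j - t)) ∧
        ∀ t < l, (i + t, j - t) ∉ shadowArcs D := by
    intro a ha hash
    obtain ⟨i, j, l, hst, t, ht, hat⟩ := stack_exists D hsane ha
    refine ⟨i, j, l, hst, hCan i j l hst, ⟨t, ht, hat⟩, ?_⟩
    intro s hs hmem
    exact hash (by rw [hat]; exact shadow_closed D hsane hst hs ht hmem)
  refine ⟨part1, ⟨fun a ha => hD1 a (hsub ha),
    fun a ha b hb => hD2 a (hsub ha) b (hsub hb)⟩, ?_, ?_⟩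
  · -- Noncrossing
    intro ⟨f, hf1, hf2, hf3, hf4⟩
    exact hNC ⟨f, fun t => hsub (hf1 t), hf2, hf3, hf4⟩
  · -- Canonical
    intro i j l hst
    obtain ⟨hl, hmem, hlow, hhigh⟩ := hst
    have ha : (i, j) ∈ D \ shadowArcs D := by
      have := hmem 0 hl
      simpa using this
    have haD : (i, j) ∈ D := hsub ha
    have hash : (i, j) ∉ shadowArcs D := (Finset.mem_sdiff.mp ha).2
    obtain ⟨i₂, j₂, l₂, hst₂, hσ, ⟨t₂, ht₂, hat₂⟩, hall⟩ := part1 _ haD hash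
    -- the stack (i₂,j₂,l₂) of D is a stack of D \ shadowArcs D
    have hst₂' : IsStack (D \ shadowArcs D) i₂ j₂ l₂ := by
      refine ⟨hst₂.1, fun s hs => Finset.mem_sdiff.mpr ⟨hst₂.2.1 s hs, hall s hs⟩, ?_, ?_⟩
      · intro hmem'
        exact hst₂.2.2.1 (hsub hmem')
      · intro hmem'
        exact hst₂.2.2.2 (hsub hmem')
    have heq : ((i : ℕ) + 0, j - 0) = (i₂ + t₂, j₂ - t₂) := by
      simpa using hat₂
    obtain ⟨rfl, rfl, rfl⟩ :=
      stack_unique _ hsane' ⟨hl, hmem, hlow, hhigh⟩ hst₂' hl ht₂ heq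
    exact hσ
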